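/- Let F be a continuous function on S^n with ‖F‖₂ ≠ 0 and Fourier coefficients F̂_l^k in the orthonormal hyperspherical-harmonic basis Y_l^k. Then the (unnormalized) center of gravity satisfies ‖F‖₂² · ξ_O(F) = ∑_{l₁,k,l₂,m} conj(F̂_{l₁}^k) F̂_{l₂}^m I(l₁,k,l₂,m), where I(l₁,k,l₂,m) = ∫_{S^n} x · conj(Y_{l₁}^k(x)) Y_{l₂}^m(x) dσ(x) ∈ ℂ^{n+1}, and moreover I(l₁,k,l₂,m) = 0 unless |l₁ - l₂| = 1 together with: there exists ν ∈ {1,…,n} such that m_ι = k_ι ± 1 for all indices ι < ν and m_ι = k_ι for all ι ≥ ν. -/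

import Mathlib

open Real MeasureTheory

/-- The Gegenbauer polynomial `C_l^λ(t)` (explicit formula, equivalent to the
generating-function definition `∑ C_l^λ(t) r^l = (1 - 2tr + r²)^(-λ)`). -/
noncomputable def gegenbauer (lam : ℝ) (l : ℕ) (t : ℝ) : ℝ :=
  ∑ k ∈ Finset.range (l / 2 + 1),
    (-1 : ℝ) ^ k * Real.Gamma (lam + l - k) /
      (Real.Gamma lam * (Nat.factorial k) * (Nat.factorial (l - 2 * k))) *
      (2 * t) ^ (l - 2 * k)

/-- The spherical-coordinate parametrization of `S^n ⊂ ℝ^{n+1}` by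
`(θ₁,…,θ_{n-1}) ∈ [0,π]^{n-1}` and `φ ∈ [0,2π)` (here `0`-indexed). -/
noncomputable def sphCoord (n : ℕ) (θ : Fin (n - 1) → ℝ) (φ : ℝ) : Fin (n + 1) → ℝ :=
  fun i =>
    if h : (i : ℕ) < n - 1 then
      (∏ j ∈ Finset.univ.filter fun j : Fin (n - 1) => (j : ℕ) < (i : ℕ), Real.sin (θ j)) *
        Real.cos (θ ⟨i, h⟩)
    else
      (∏ j, Real.sin (θ j)) * (if (i : ℕ) = n - 1 then Real.cos φ else Real.sin φ)

/-- The density of the normalized surface measure `dσ` in spherical coordinates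
(up to the factor `1/Σ_n`): `sin^{n-1}θ₁ · sin^{n-2}θ₂ ⋯ sin θ_{n-1}`. -/
noncomputable def sphWeight (n : ℕ) (θ : Fin (n - 1) → ℝ) : ℝ :=
  ∏ j : Fin (n - 1), Real.sin (θ j) ^ (n - 1 - (j : ℕ))

/-- The coordinate domain `[0,π]^{n-1} × [0,2π]`. -/
noncomputable def sphDomain (n : ℕ) : Set ((Fin (n - 1) → ℝ) × ℝ) :=
  (Set.univ.pi fun _ => Set.Icc (0 : ℝ) Real.pi) ×ˢ Set.Icc (0 : ℝ) (2 * Real.pi)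

/-- `Σ_n`, the surface area of `S^n`. -/
noncomputable def sphArea (n : ℕ) : ℝ :=
  2 * Real.pi ^ (((n : ℝ) + 1) / 2) / Real.Gamma (((n : ℝ) + 1) / 2)

/-- The index set of the hyperspherical-harmonic basis: pairs `(l, k̂)` where
`k̂ = (k₀, k₁, …, k_{n-1}, 0, 0, …)` with `k₀ = l ≥ k₁ ≥ ⋯ ≥ |k_{n-1}| ≥ 0`. -/
def HSHIndex (n : ℕ) : Type :=
  {p : ℕ × (ℕ → ℤ) // p.2 0 = p.1 ∧ (∀ i, i + 1 ≤ n - 1 → |p.2 (i + 1)| ≤ p.2 i) ∧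
    ∀ i, n ≤ i → p.2 i = 0}

/-- The (unnormalized) hyperspherical harmonic `Y_l^k` in spherical coordinates:
`∏_{τ=1}^{n-1} C_{k_{τ-1}-k_τ}^{(n-τ)/2+k_τ}(cos θ_τ) · sin^{k_τ}θ_τ · e^{i k_{n-1} φ}`
(`0`-indexed, with `k_τ` replaced by `|k_τ|`, which only matters for `τ = n-1`). -/
noncomputable def hshFun (n : ℕ) (k : ℕ → ℤ) (θ : Fin (n - 1) → ℝ) (φ : ℝ) : ℂ :=
  ((∏ τ : Fin (n - 1),
      gegenbauer (((n : ℝ) - 1 - (τ : ℕ)) / 2 + (k ((τ : ℕ) + 1)).natAbs)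
          ((k (τ : ℕ) - |k ((τ : ℕ) + 1)|).toNat) (Real.cos (θ τ)) *
        Real.sin (θ τ) ^ (k ((τ : ℕ) + 1)).natAbs : ℝ) : ℂ) *
    Complex.exp (Complex.I * (k (n - 1) : ℂ) * (φ : ℂ))

/-!
(a) Unconditional summability in `ℂ` is absolute, so at every point the double series
`∑_{p,q} conj (c_p Y_p) c_q Y_q` converges absolutely to `|F|²`; the domination hypothesis lets it
be integrated term by term against `x_j dσ`.

(b) In spherical coordinates `x_j conj (Y_k) Y_m dσ` is a product of one-variable integrands, one
in each `θ_τ` and one in `φ`. The `φ`-integral of `e^{i (m_{n-1} - k_{n-1}) φ}` against `1`, `cos φ`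
or `sin φ` forces `m_{n-1} - k_{n-1}` to be `0` or `±1`. Each `θ_τ`-integral pairs two Gegenbauer
polynomials in `cos θ` against a power of `sin θ`, times `sin θ`, `cos θ` or `1`. Since
`C_a^{M/2}(cos θ) sin^M θ` is orthogonal to all polynomials in `cos θ` of degree `< a` (integrate
the Wronskian of the Gegenbauer equation) and `C_a^λ(-t) = (-1)^a C_a^λ(t)`, the relation between
`k_{τ+1}` and `m_{τ+1}` propagates to `k_τ` and `m_τ`. Descending from `φ` to `θ₁` gives the
pattern with `ν = min (j + 1) n`.
-/

open Polynomial

theorem sum_range_succ_add_eq_zero {A B : ℕ → ℝ} {K : ℕ} (hA : A K = 0) (hB : B 0 = 0)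
    (hAB : ∀ k < K, A k + B (k + 1) = 0) : ∑ k ∈ Finset.range (K + 1), (A k + B k) = 0 := by
  rw [Finset.sum_add_distrib, Finset.sum_range_succ, Finset.sum_range_succ', hA, hB, add_zero,
    add_zero, ← Finset.sum_add_distrib]
  exact Finset.sum_eq_zero fun k hk => hAB k (Finset.mem_range.mp hk)

theorem natCast_mul_pow_pred_mul (e : ℕ) (t : ℝ) : (e : ℝ) * t ^ (e - 1) * t = e * t ^ e := by
  cases e <;> simp [pow_succ, mul_assoc]

theorem natCast_mul_pow_sub_two_mul_sq (e : ℕ) (t : ℝ) :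
    (e : ℝ) * ((e - 1 : ℕ) : ℝ) * t ^ (e - 1 - 1) * t ^ 2 = e * ((e - 1 : ℕ) : ℝ) * t ^ e := by
  rcases e with _ | _ | e <;> simp [pow_succ]; ring

theorem natCast_mul_natCast_pred (e : ℕ) : (e : ℝ) * ((e - 1 : ℕ) : ℝ) = e * (e - 1) := by
  cases e <;> simp

theorem intervalIntegral_eq_zero_of_reflect_eq_neg {f : ℝ → ℝ} {a b : ℝ}
    (h : ∀ x, f (a + b - x) = -f x) : ∫ x in a..b, f x = 0 := by
  have href := intervalIntegral.integral_comp_sub_left f (a + b) (a := a) (b := b)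
  simp only [h, intervalIntegral.integral_neg, add_sub_cancel_right, add_sub_cancel_left] at href
  linarith

theorem hasSum_conj_mul_of_hasSum {ι : Type*} {f : ι → ℂ} {a : ℂ} (h : HasSum f a) :
    HasSum (fun pq : ι × ι => (starRingEnd ℂ) (f pq.1) * f pq.2) ((‖a‖ ^ 2 : ℝ) : ℂ) := by
  have hnorm : Summable fun i => ‖f i‖ := summable_norm_iff.mpr h.summable
  have hprod := HasSum.mul (f := fun i => (starRingEnd ℂ) (f i)) (g := f)
    (Complex.hasSum_conj'.mpr h) h
    (summable_mul_of_summable_norm (f := fun i => (starRingEnd ℂ) (f i))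
      (by simpa only [RCLike.norm_conj] using hnorm) hnorm)
  rwa [Complex.conj_mul', ← Complex.ofReal_pow] at hprod

theorem hasSum_integral_conj_mul_mul {α ι : Type*} [MeasurableSpace α] [Countable ι]
    {μ : Measure α} {f : ι → α → ℂ} {F : α → ℂ} (ρ : α → ℂ) (hF : ∀ x, HasSum (f · x) (F x))
    (hint : ∀ pq : ι × ι, Integrable (fun x => (starRingEnd ℂ) (f pq.1 x) * f pq.2 x * ρ x) μ)
    (hsum : Summable fun pq : ι × ι =>
      ∫ x, ‖(starRingEnd ℂ) (f pq.1 x) * f pq.2 x * ρ x‖ ∂μ) :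
    HasSum (fun pq : ι × ι => ∫ x, (starRingEnd ℂ) (f pq.1 x) * f pq.2 x * ρ x ∂μ)
      (∫ x, ((‖F x‖ ^ 2 : ℝ) : ℂ) * ρ x ∂μ) := by
  rw [integral_congr_ae (.of_forall fun x =>
    (((hasSum_conj_mul_of_hasSum (hF x)).mul_right (ρ x)).tsum_eq).symm)]
  exact hasSum_integral_of_summable_integral_norm hint hsum

/-! ### Gegenbauer polynomials -/

noncomputable def gegenbauerCoeff (lam : ℝ) (l k : ℕ) : ℝ :=
  (-1 : ℝ) ^ k * Real.Gamma (lam + l - k) /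
    (Real.Gamma lam * (Nat.factorial k) * (Nat.factorial (l - 2 * k)))

noncomputable def gegenbauerPoly (lam : ℝ) (l : ℕ) : ℝ[X] :=
  ∑ k ∈ Finset.range (l / 2 + 1), C (gegenbauerCoeff lam l k * 2 ^ (l - 2 * k)) * X ^ (l - 2 * k)

theorem eval_gegenbauerPoly (lam : ℝ) (l : ℕ) (t : ℝ) :
    (gegenbauerPoly lam l).eval t = gegenbauer lam l t := by
  simp only [gegenbauerPoly, gegenbauer, gegenbauerCoeff, eval_finsetSum, eval_mul, eval_C,
    eval_pow, eval_X, mul_pow]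
  exact Finset.sum_congr rfl fun k _ => by ring

theorem natDegree_gegenbauerPoly_le (lam : ℝ) (l : ℕ) : (gegenbauerPoly lam l).natDegree ≤ l :=
  natDegree_sum_le_of_forall_le _ _ fun k _ =>
    (natDegree_C_mul_X_pow_le _ _).trans (Nat.sub_le l (2 * k))

@[fun_prop]
theorem continuous_gegenbauer (lam : ℝ) (l : ℕ) : Continuous (gegenbauer lam l) :=
  funext (eval_gegenbauerPoly lam l) ▸ (gegenbauerPoly lam l).continuous

theorem gegenbauer_neg (lam : ℝ) (l : ℕ) (t : ℝ) :
    gegenbauer lam l (-t) = (-1) ^ l * gegenbauer lam l t := by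
  rw [gegenbauer, gegenbauer, Finset.mul_sum]
  refine Finset.sum_congr rfl fun k hk => ?_
  have h2k : 2 * k ≤ l := by have := Finset.mem_range.mp hk; omega
  have hsign : (-1 : ℝ) ^ l = (-1) ^ (l - 2 * k) := by
    conv_lhs => rw [← Nat.sub_add_cancel h2k, pow_add, pow_mul]
    simp
  rw [hsign, show 2 * -t = -(2 * t) by ring, neg_pow (2 * t)]
  ring

theorem gegenbauerCoeff_succ_mul {lam : ℝ} (hlam : 0 < lam) {l k : ℕ} (hk : 2 * k + 2 ≤ l) :
    gegenbauerCoeff lam l (k + 1) * ((k + 1) * (lam + l - k - 1)) =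
      -(gegenbauerCoeff lam l k * ((l - 2 * k) * (l - 2 * k - 1))) := by
  have hlk : (2 * k + 2 : ℝ) ≤ l := by exact_mod_cast hk
  have hx : 0 < lam + l - k - 1 := by linarith
  have hGamma : Real.Gamma (lam + l - k) = (lam + l - k - 1) * Real.Gamma (lam + l - k - 1) := by
    rw [← Real.Gamma_add_one hx.ne']; ring_nf
  obtain ⟨r, rfl⟩ : ∃ r, l = 2 * k + 2 + r := ⟨l - (2 * k + 2), by omega⟩
  have hfac :
      (Nat.factorial (2 * k + 2 + r - 2 * k) : ℝ) = (r + 2) * (r + 1) * Nat.factorial r := by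
    rw [show 2 * k + 2 + r - 2 * k = r + 2 by omega, Nat.factorial_succ, Nat.factorial_succ]
    push_cast; ring
  have hfac' : 2 * k + 2 + r - 2 * (k + 1) = r := by omega
  have hΓ : Real.Gamma lam ≠ 0 := (Real.Gamma_pos_of_pos hlam).ne'
  have hΓ' : Real.Gamma (lam + ↑(2 * k + 2 + r) - k - 1) ≠ 0 := (Real.Gamma_pos_of_pos hx).ne'
  have hshift : lam + ↑(2 * k + 2 + r) - (k + 1) = lam + ↑(2 * k + 2 + r) - k - 1 := by ring
  simp only [gegenbauerCoeff, hfac, hfac', hGamma, Nat.factorial_succ, Nat.cast_mul,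
    Nat.cast_succ, pow_succ, hshift]
  field_simp
  push_cast
  ring

theorem gegenbauer_operator_pow (lam : ℝ) {l k : ℕ} (hk : 2 * k ≤ l) (t : ℝ) :
    (1 - t ^ 2) * ((l - 2 * k : ℕ) * (l - 2 * k - 1 : ℕ) * t ^ (l - 2 * k - 1 - 1))
      - (2 * lam + 1) * t * ((l - 2 * k : ℕ) * t ^ (l - 2 * k - 1))
      + l * (l + 2 * lam) * t ^ (l - 2 * k)
      = (l - 2 * k : ℕ) * (l - 2 * k - 1 : ℕ) * t ^ (l - 2 * k - 1 - 1)
        + 4 * k * (lam + l - k) * t ^ (l - 2 * k) := by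
  have he : ((l - 2 * k : ℕ) : ℝ) = l - 2 * k := by push_cast [Nat.cast_sub hk]; ring
  have hpred := natCast_mul_natCast_pred (l - 2 * k)
  rw [he] at hpred
  linear_combination -natCast_mul_pow_sub_two_mul_sq (l - 2 * k) t
    - (2 * lam + 1) * natCast_mul_pow_pred_mul (l - 2 * k) t
    - t ^ (l - 2 * k) * hpred - (2 * lam + 1 + ((l - 2 * k - 1 : ℕ) : ℝ)) * t ^ (l - 2 * k) * he

theorem gegenbauer_ode {lam : ℝ} (hlam : 0 < lam) (l : ℕ) (t : ℝ) :
    (1 - t ^ 2) * (gegenbauerPoly lam l).derivative.derivative.eval t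
      - (2 * lam + 1) * t * (gegenbauerPoly lam l).derivative.eval t
      + l * (l + 2 * lam) * (gegenbauerPoly lam l).eval t = 0 := by
  simp only [gegenbauerPoly, derivative_sum, derivative_C_mul_X_pow, eval_finsetSum, eval_mul,
    eval_C, eval_pow, eval_X, Finset.mul_sum, ← Finset.sum_sub_distrib, ← Finset.sum_add_distrib]
  set g := gegenbauerCoeff lam l
  let A : ℕ → ℝ := fun k =>
    g k * 2 ^ (l - 2 * k) * ((l - 2 * k : ℕ) * (l - 2 * k - 1 : ℕ)) * t ^ (l - 2 * k - 1 - 1)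
  let B : ℕ → ℝ := fun k => g k * 2 ^ (l - 2 * k) * (4 * k * (lam + l - k)) * t ^ (l - 2 * k)
  have hterm : ∀ k ∈ Finset.range (l / 2 + 1),
      (1 - t ^ 2) * (g k * 2 ^ (l - 2 * k) * (l - 2 * k : ℕ) * (l - 2 * k - 1 : ℕ)
          * t ^ (l - 2 * k - 1 - 1))
        - (2 * lam + 1) * t * (g k * 2 ^ (l - 2 * k) * (l - 2 * k : ℕ) * t ^ (l - 2 * k - 1))
        + l * (l + 2 * lam) * (g k * 2 ^ (l - 2 * k) * t ^ (l - 2 * k)) = A k + B k := by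
    intro k hk
    linear_combination (g k * 2 ^ (l - 2 * k)) * gegenbauer_operator_pow lam
      (by have := Finset.mem_range.mp hk; omega : 2 * k ≤ l) t
  rw [Finset.sum_congr rfl hterm]
  refine sum_range_succ_add_eq_zero ?_ (by simp [B]) fun k hk => ?_
  · have : (l - 2 * (l / 2) : ℕ) * (l - 2 * (l / 2) - 1) = 0 := by
      rcases Nat.mod_two_eq_zero_or_one l with h | h <;> simp [*] <;> omega
    simp only [A, ← Nat.cast_mul, this, Nat.cast_zero, mul_zero, zero_mul]
  · have h2k : 2 * k + 2 ≤ l := by omega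
    have hrec := gegenbauerCoeff_succ_mul hlam h2k
    obtain ⟨r, hr⟩ : ∃ r, l - 2 * k = r + 2 := ⟨l - 2 * k - 2, by omega⟩
    have hr' : l - 2 * (k + 1) = r := by omega
    have hcast : (r : ℝ) + 2 = l - 2 * k := by
      rw [← Nat.cast_ofNat, ← Nat.cast_add, ← hr, Nat.cast_sub (by omega)]; push_cast; ring
    simp only [A, B, hr, hr', pow_add]
    push_cast
    linear_combination (4 * 2 ^ r * t ^ r) * hrec
      + (4 * g k * t ^ r * 2 ^ r * (r + l - 2 * k + 1)) * hcast

/-! ### Orthogonality of Gegenbauer polynomials -/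

theorem hasDerivAt_gegenbauer_wronskian {M : ℕ} (hM : 0 < M) (a m : ℕ) (θ : ℝ) :
    HasDerivAt (fun θ => sin θ ^ (M + 1) *
        (m * cos θ ^ (m - 1) * (gegenbauerPoly (M / 2) a).eval (cos θ)
          - cos θ ^ m * (gegenbauerPoly (M / 2) a).derivative.eval (cos θ)))
      (sin θ ^ M * gegenbauer (M / 2) a (cos θ) *
        ((m * (m + M) - a * (a + M)) * cos θ ^ m - m * (m - 1) * cos θ ^ (m - 2))) θ := by
  set P := gegenbauerPoly (M / 2) a
  have hP := (P.hasDerivAt (cos θ)).comp θ (hasDerivAt_cos θ)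
  have hP' := (P.derivative.hasDerivAt (cos θ)).comp θ (hasDerivAt_cos θ)
  have h := ((hasDerivAt_sin θ).fun_pow (M + 1)).fun_mul
    ((((hasDerivAt_cos θ).fun_pow (m - 1)).const_mul (m : ℝ)).fun_mul hP
      |>.fun_sub (((hasDerivAt_cos θ).fun_pow m).fun_mul hP'))
  refine h.congr_deriv ?_
  have hode := gegenbauer_ode (lam := M / 2) (by positivity) a (cos θ)
  simp only [Function.comp_apply]
  rw [← eval_gegenbauerPoly, Nat.add_sub_cancel, show m - 2 = m - 1 - 1 by omega]
  push_cast
  linear_combination (sin θ ^ M * cos θ ^ m) * hode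
    + (M + 1) * sin θ ^ M * P.eval (cos θ) * natCast_mul_pow_pred_mul m (cos θ)
    + sin θ ^ M * P.eval (cos θ) * natCast_mul_pow_sub_two_mul_sq m (cos θ)
    + sin θ ^ M * P.eval (cos θ) * (cos θ ^ m - cos θ ^ (m - 1 - 1)) * natCast_mul_natCast_pred m
    + (sin θ ^ M * (cos θ ^ m * P.derivative.derivative.eval (cos θ)
        - m * ((m - 1 : ℕ) : ℝ) * cos θ ^ (m - 1 - 1) * P.eval (cos θ))) * sin_sq_add_cos_sq θ

theorem integral_cos_pow_mul_gegenbauer_recurrence {M : ℕ} (hM : 0 < M) (a m : ℕ) :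
    (m * (m + M) - a * (a + M)) *
        ∫ θ in (0)..π, cos θ ^ m * gegenbauer (M / 2) a (cos θ) * sin θ ^ M
      = m * (m - 1) *
        ∫ θ in (0)..π, cos θ ^ (m - 2) * gegenbauer (M / 2) a (cos θ) * sin θ ^ M := by
  have hW := intervalIntegral.integral_eq_sub_of_hasDerivAt (a := 0) (b := π)
    (fun θ _ => hasDerivAt_gegenbauer_wronskian hM a m θ)
    ((by fun_prop : Continuous _).intervalIntegrable _ _)
  simp only [sin_pi, sin_zero, zero_pow (Nat.succ_ne_zero M), zero_mul, sub_self] at hW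
  rw [← intervalIntegral.integral_const_mul, ← intervalIntegral.integral_const_mul,
    ← sub_eq_zero, ← intervalIntegral.integral_sub
      ((by fun_prop : Continuous _).intervalIntegrable _ _)
      ((by fun_prop : Continuous _).intervalIntegrable _ _)]
  exact (intervalIntegral.integral_congr fun θ _ => by ring).trans hW

theorem integral_cos_pow_mul_gegenbauer_eq_zero {M : ℕ} (hM : 0 < M) {a m : ℕ} (hm : m < a) :
    ∫ θ in (0)..π, cos θ ^ m * gegenbauer (M / 2) a (cos θ) * sin θ ^ M = 0 := by
  induction m using Nat.strong_induction_on with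
  | _ m ih =>
    have hcoef : (m * (m + M) - a * (a + M) : ℝ) ≠ 0 := by
      have : (m : ℝ) + 1 ≤ a := by exact_mod_cast hm
      nlinarith
    have hlower : (m : ℝ) * (m - 1) *
        ∫ θ in (0)..π, cos θ ^ (m - 2) * gegenbauer (M / 2) a (cos θ) * sin θ ^ M = 0 := by
      rcases lt_or_ge m 2 with h | h
      · interval_cases m <;> simp
      · rw [ih (m - 2) (by omega) (by omega), mul_zero]
    exact (mul_eq_zero.mp ((integral_cos_pow_mul_gegenbauer_recurrence hM a m).trans
      hlower)).resolve_left hcoef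

theorem integral_eval_mul_gegenbauer_eq_zero {M : ℕ} (hM : 0 < M) {a : ℕ} {Q : ℝ[X]}
    (hQ : Q.natDegree < a) :
    ∫ θ in (0)..π, Q.eval (cos θ) * gegenbauer (M / 2) a (cos θ) * sin θ ^ M = 0 := by
  simp only [eval_eq_sum_range, Finset.sum_mul]
  rw [intervalIntegral.integral_finsetSum fun i _ =>
    (by fun_prop : Continuous _).intervalIntegrable _ _]
  refine Finset.sum_eq_zero fun i hi => ?_
  simp only [mul_assoc, intervalIntegral.integral_const_mul]
  simp only [← mul_assoc, integral_cos_pow_mul_gegenbauer_eq_zero hM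
    ((Nat.lt_succ_iff.mp (Finset.mem_range.mp hi)).trans_lt hQ), mul_zero]

theorem le_add_of_integral_gegenbauer_mul_ne_zero {M : ℕ} (hM : 0 < M) (lam : ℝ) {a b ε : ℕ}
    (h : ∫ x in (0)..π, gegenbauer (M / 2) a (cos x) * gegenbauer lam b (cos x)
      * cos x ^ ε * sin x ^ M ≠ 0) :
    a ≤ b + ε := by
  by_contra! hlt
  refine h (Eq.trans (intervalIntegral.integral_congr fun x _ => ?_)
    (integral_eval_mul_gegenbauer_eq_zero hM (a := a) (Q := gegenbauerPoly lam b * X ^ ε) ?_))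
  · simp only [eval_mul, eval_pow, eval_X, eval_gegenbauerPoly]
    ring
  · exact (natDegree_mul_le.trans (add_le_add (natDegree_gegenbauerPoly_le _ _)
      (natDegree_X_pow_le ε))).trans_lt hlt

theorem integral_gegenbauer_mul_gegenbauer_eq_zero_of_odd (lamA lamB : ℝ) {a b ε : ℕ} (E : ℕ)
    (hodd : Odd (a + b + ε)) :
    ∫ x in (0)..π, gegenbauer lamA a (cos x) * gegenbauer lamB b (cos x) * cos x ^ ε * sin x ^ E
      = 0 := by
  refine intervalIntegral_eq_zero_of_reflect_eq_neg fun x => ?_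
  have hsign : (-1 : ℝ) ^ a * (-1) ^ b * (-1) ^ ε = -1 := by
    rw [← pow_add, ← pow_add, hodd.neg_one_pow]
  simp only [zero_add, cos_pi_sub, sin_pi_sub, gegenbauer_neg, neg_pow (cos x)]
  linear_combination (gegenbauer lamA a (cos x) * gegenbauer lamB b (cos x) * cos x ^ ε
    * sin x ^ E) * hsign

theorem gegenbauer_selection_of_same_order {M : ℕ} (hM : 0 < M) {a b ε : ℕ}
    (h : ∫ x in (0)..π, gegenbauer (M / 2) a (cos x) * gegenbauer (M / 2) b (cos x)
      * cos x ^ ε * sin x ^ M ≠ 0) :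
    a ≤ b + ε ∧ b ≤ a + ε ∧ Even (a + b + ε) := by
  refine ⟨le_add_of_integral_gegenbauer_mul_ne_zero hM _ h,
    le_add_of_integral_gegenbauer_mul_ne_zero hM _ fun h0 =>
      h (Eq.trans (intervalIntegral.integral_congr fun x _ => by ring) h0), ?_⟩
  by_contra hodd
  exact h (integral_gegenbauer_mul_gegenbauer_eq_zero_of_odd _ _ M
    (Nat.not_even_iff_odd.mp hodd))

theorem gegenbauer_selection_of_adjacent_order {M : ℕ} (hM : 0 < M) {a b : ℕ}
    (h : ∫ x in (0)..π, gegenbauer (M / 2) a (cos x) * gegenbauer ((M + 2 : ℕ) / 2) b (cos x)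
      * sin x ^ (M + 2) ≠ 0) :
    b ≤ a ∧ a ≤ b + 2 ∧ Even (a + b) := by
  refine ⟨le_add_of_integral_gegenbauer_mul_ne_zero (M := M + 2) (by omega) (M / 2) (ε := 0)
    fun h0 => h (Eq.trans (intervalIntegral.integral_congr fun x _ => by ring) h0), ?_, ?_⟩
  · by_contra! hlt
    refine h (Eq.trans (intervalIntegral.integral_congr fun x _ => ?_)
      (integral_eval_mul_gegenbauer_eq_zero hM (a := a)
        (Q := gegenbauerPoly ((M + 2 : ℕ) / 2) b * (1 - X ^ 2)) ?_))
    · simp only [eval_mul, eval_sub, eval_one, eval_pow, eval_X, eval_gegenbauerPoly, pow_add,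
        ← sin_sq_add_cos_sq x]
      ring
    · refine (natDegree_mul_le.trans (add_le_add (natDegree_gegenbauerPoly_le _ _) ?_)).trans_lt
        hlt
      compute_degree!
  · by_contra hodd
    refine h (Eq.trans (intervalIntegral.integral_congr fun x _ => ?_)
      (integral_gegenbauer_mul_gegenbauer_eq_zero_of_odd (M / 2) ((M + 2 : ℕ) / 2) (ε := 0)
        (M + 2) (by simpa using Nat.not_even_iff_odd.mp hodd)))
    simp only [pow_zero, mul_one]

/-! ### Azimuthal integrals -/

theorem integral_exp_int_mul_I_eq_zero {d : ℤ} (hd : d ≠ 0) :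
    ∫ x in (0)..(2 * π), Complex.exp (Complex.I * d * x) = 0 := by
  have hc : Complex.I * d ≠ 0 := mul_ne_zero Complex.I_ne_zero (Int.cast_ne_zero.mpr hd)
  have hperiod : Complex.exp (Complex.I * d * ((2 * π : ℝ) : ℂ)) = 1 := by
    rw [← Complex.exp_int_mul_two_pi_mul_I d]; push_cast; ring_nf
  rw [integral_exp_mul_complex hc, hperiod]
  simp

theorem exp_int_mul_I_mul_cos (d : ℤ) (x : ℝ) :
    Complex.exp (Complex.I * d * x) * (cos x : ℂ) =
      (Complex.exp (Complex.I * (d + 1 : ℤ) * x) + Complex.exp (Complex.I * (d - 1 : ℤ) * x))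
        / 2 := by
  rw [Complex.ofReal_cos, Complex.cos]
  push_cast
  rw [show Complex.I * (d + 1) * x = Complex.I * d * x + x * Complex.I by ring,
    show Complex.I * (d - 1) * x = Complex.I * d * x + -x * Complex.I by ring,
    Complex.exp_add, Complex.exp_add]
  ring

theorem exp_int_mul_I_mul_sin (d : ℤ) (x : ℝ) :
    Complex.exp (Complex.I * d * x) * (sin x : ℂ) =
      (Complex.exp (Complex.I * (d - 1 : ℤ) * x) - Complex.exp (Complex.I * (d + 1 : ℤ) * x))
        * Complex.I / 2 := by
  rw [Complex.ofReal_sin, Complex.sin]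
  push_cast
  rw [show Complex.I * (d + 1) * x = Complex.I * d * x + x * Complex.I by ring,
    show Complex.I * (d - 1) * x = Complex.I * d * x + -x * Complex.I by ring,
    Complex.exp_add, Complex.exp_add]
  ring

theorem integral_exp_int_mul_I_mul_cos_eq_zero {d : ℤ} (hd : |d| ≠ 1) :
    ∫ x in (0)..(2 * π), Complex.exp (Complex.I * d * x) * (cos x : ℂ) = 0 := by
  rw [Int.abs_eq_natAbs] at hd
  simp only [exp_int_mul_I_mul_cos]
  rw [intervalIntegral.integral_div, intervalIntegral.integral_add
      ((by fun_prop : Continuous _).intervalIntegrable _ _)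
      ((by fun_prop : Continuous _).intervalIntegrable _ _),
    integral_exp_int_mul_I_eq_zero (by omega), integral_exp_int_mul_I_eq_zero (by omega)]
  simp

theorem integral_exp_int_mul_I_mul_sin_eq_zero {d : ℤ} (hd : |d| ≠ 1) :
    ∫ x in (0)..(2 * π), Complex.exp (Complex.I * d * x) * (sin x : ℂ) = 0 := by
  rw [Int.abs_eq_natAbs] at hd
  simp only [exp_int_mul_I_mul_sin]
  rw [intervalIntegral.integral_div, intervalIntegral.integral_mul_const,
    intervalIntegral.integral_sub
      ((by fun_prop : Continuous _).intervalIntegrable _ _)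
      ((by fun_prop : Continuous _).intervalIntegrable _ _),
    integral_exp_int_mul_I_eq_zero (by omega), integral_exp_int_mul_I_eq_zero (by omega)]
  simp

/-! ### Separation of variables -/

noncomputable def hshFactor (N : ℕ) (k₀ k₁ : ℤ) (x : ℝ) : ℝ :=
  gegenbauer ((N : ℝ) / 2 + k₁.natAbs) (k₀ - |k₁|).toNat (cos x) * sin x ^ k₁.natAbs

theorem hshFactor_selection_of_eq {N : ℕ} (hN : 0 < N) {k₀ m₀ k₁ : ℤ} (hk : |k₁| ≤ k₀)
    (hm : |k₁| ≤ m₀) (ε : ℕ)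
    (h : ∫ x in (0)..π, hshFactor N k₀ k₁ x * hshFactor N m₀ k₁ x * sin x ^ N * cos x ^ ε ≠ 0) :
    |m₀ - k₀| ≤ ε ∧ Even (m₀ - k₀ + ε) := by
  -- `sin^{|k₁|} x · sin^{|k₁|} x · sin^N x` is the Gegenbauer weight `sin^{2λ} x`, `λ = N/2 + |k₁|`
  have hlam : (N : ℝ) / 2 + k₁.natAbs = ((N + 2 * k₁.natAbs : ℕ) : ℝ) / 2 := by push_cast; ring
  obtain ⟨hab, hba, r, hr⟩ := gegenbauer_selection_of_same_order (M := N + 2 * k₁.natAbs)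
    (a := (k₀ - |k₁|).toNat) (b := (m₀ - |k₁|).toNat) (ε := ε) (by omega) (by
      refine fun h0 => h (Eq.trans (intervalIntegral.integral_congr fun x _ => ?_) h0)
      simp only [hshFactor, hlam]
      ring)
  simp only [Int.abs_eq_natAbs] at *
  exact ⟨by omega, ⟨r - (k₀ - k₁.natAbs).toNat, by omega⟩⟩

theorem hshFactor_selection_of_adjacent {N : ℕ} (hN : 0 < N) {k₀ k₁ m₀ m₁ : ℤ}
    (hk : |k₁| ≤ k₀) (hm : |m₁| ≤ m₀) (h₁ : |m₁ - k₁| = 1)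
    (h : ∫ x in (0)..π, hshFactor N k₀ k₁ x * hshFactor N m₀ m₁ x * sin x ^ N * sin x ≠ 0) :
    |m₀ - k₀| = 1 := by
  wlog hmk : m₁.natAbs = k₁.natAbs + 1 generalizing k₀ k₁ m₀ m₁
  · rw [abs_sub_comm] at h₁ ⊢
    refine this hm hk h₁ (fun h0 => h (Eq.trans (intervalIntegral.integral_congr fun x _ => ?_) h0))
      (by simp only [Int.abs_eq_natAbs] at h₁; omega)
    ring
  have hlam : (N : ℝ) / 2 + k₁.natAbs = ((N + 2 * k₁.natAbs : ℕ) : ℝ) / 2 := by push_cast; ring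
  have hlam' : (N : ℝ) / 2 + ((k₁.natAbs + 1 : ℕ) : ℝ) = ((N + 2 * k₁.natAbs + 2 : ℕ) : ℝ) / 2 := by
    push_cast; ring
  obtain ⟨hba, hab, r, hr⟩ := gegenbauer_selection_of_adjacent_order (M := N + 2 * k₁.natAbs)
    (a := (k₀ - |k₁|).toNat) (b := (m₀ - |m₁|).toNat) (by omega) (by
      refine fun h0 => h (Eq.trans (intervalIntegral.integral_congr fun x _ => ?_) h0)
      simp only [hshFactor]
      rw [hmk, hlam, hlam']
      ring)
  simp only [Int.abs_eq_natAbs] at *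
  omega

noncomputable def coordFactor (j τ : ℕ) (x : ℝ) : ℝ :=
  if τ < j then sin x else if τ = j then cos x else 1

noncomputable def azimuthFactor (n j : ℕ) (φ : ℝ) : ℝ :=
  if j < n - 1 then 1 else if j = n - 1 then cos φ else sin φ

theorem sphCoord_eq_prod (n : ℕ) (θ : Fin (n - 1) → ℝ) (φ : ℝ) (j : Fin (n + 1)) :
    sphCoord n θ φ j = (∏ τ : Fin (n - 1), coordFactor j τ (θ τ)) * azimuthFactor n j φ := by
  unfold sphCoord azimuthFactor
  split_ifs with hj
  · have hsplit : ∀ τ : Fin (n - 1), coordFactor j τ (θ τ) =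
        (if (τ : ℕ) < j then sin (θ τ) else 1) * (if τ = ⟨j, hj⟩ then cos (θ τ) else 1) := by
      intro τ
      simp only [coordFactor, Fin.ext_iff]
      split_ifs <;> first | omega | ring
    rw [Finset.prod_congr rfl fun τ _ => hsplit τ, Finset.prod_mul_distrib, Finset.prod_filter,
      Finset.prod_ite_eq' Finset.univ, if_pos (Finset.mem_univ _), mul_one]
  all_goals
    congr 1
    exact Finset.prod_congr rfl fun τ _ => by simp [coordFactor, show (τ : ℕ) < j by omega]

theorem hshFun_eq_prod (n : ℕ) (k : ℕ → ℤ) (θ : Fin (n - 1) → ℝ) (φ : ℝ) :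
    hshFun n k θ φ = ((∏ τ : Fin (n - 1), hshFactor (n - 1 - τ) (k τ) (k (τ + 1)) (θ τ) : ℝ) : ℂ)
      * Complex.exp (Complex.I * k (n - 1) * φ) := by
  unfold hshFun hshFactor
  congr 3 with τ
  have hτ := τ.isLt
  rw [Nat.cast_sub (by omega), Nat.cast_sub (by omega), Nat.cast_one]

noncomputable def levelIntegrand (n : ℕ) (k m : ℕ → ℤ) (j τ : ℕ) (x : ℝ) : ℝ :=
  hshFactor (n - 1 - τ) (k τ) (k (τ + 1)) x * hshFactor (n - 1 - τ) (m τ) (m (τ + 1)) x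
    * sin x ^ (n - 1 - τ) * coordFactor j τ x

noncomputable def azimuthIntegrand (n : ℕ) (k m : ℕ → ℤ) (j : ℕ) (φ : ℝ) : ℂ :=
  Complex.exp (Complex.I * (m (n - 1) - k (n - 1) : ℤ) * φ) * azimuthFactor n j φ

theorem sphCoord_mul_conj_hshFun_mul_hshFun (n : ℕ) (k m : ℕ → ℤ) (j : Fin (n + 1))
    (θ : Fin (n - 1) → ℝ) (φ : ℝ) :
    (sphCoord n θ φ j : ℂ) * (starRingEnd ℂ) (hshFun n k θ φ) * hshFun n m θ φ
        * (sphWeight n θ : ℂ)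
      = (∏ τ : Fin (n - 1), (levelIntegrand n k m j τ (θ τ) : ℂ)) * azimuthIntegrand n k m j φ := by
  have hexp : (starRingEnd ℂ) (Complex.exp (Complex.I * k (n - 1) * φ))
      * Complex.exp (Complex.I * m (n - 1) * φ)
      = Complex.exp (Complex.I * (m (n - 1) - k (n - 1) : ℤ) * φ) := by
    rw [← Complex.exp_conj, ← Complex.exp_add]
    simp only [map_mul, Complex.conj_I, map_intCast, Complex.conj_ofReal]
    push_cast; ring_nf
  rw [sphCoord_eq_prod, hshFun_eq_prod, hshFun_eq_prod, map_mul, Complex.conj_ofReal,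
    azimuthIntegrand, ← hexp, sphWeight]
  simp only [levelIntegrand, Complex.ofReal_mul, Complex.ofReal_prod, Complex.ofReal_pow,
    Finset.prod_mul_distrib]
  ring

theorem integral_sphDomain_prod_mul (n : ℕ) (f : Fin (n - 1) → ℝ → ℂ) (g : ℝ → ℂ) :
    ∫ z in sphDomain n, (∏ τ, f τ (z.1 τ)) * g z.2
      = (∏ τ, ∫ x in (0)..π, f τ x) * ∫ φ in (0)..(2 * π), g φ := by
  rw [sphDomain, Measure.volume_eq_prod,
    setIntegral_prod_mul (fun θ : Fin (n - 1) → ℝ => ∏ τ, f τ (θ τ)) g, volume_pi,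
    Measure.restrict_pi_pi, integral_fintype_prod_eq_prod,
    intervalIntegral.integral_of_le (by positivity), ← integral_Icc_eq_integral_Ioc]
  congr 1
  exact Finset.prod_congr rfl fun τ _ => by
    rw [intervalIntegral.integral_of_le pi_pos.le, integral_Icc_eq_integral_Ioc]

/-! ### Selection rules -/

def SelectionRuleAt (ν : ℕ) (k m : ℕ → ℤ) (ι : ℕ) : Prop :=
  (ι < ν → |m ι - k ι| = 1) ∧ (ν ≤ ι → m ι = k ι)

theorem selectionRuleAt_of_integral_levelIntegrand_ne_zero {n ι : ℕ} (hι : ι < n - 1)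
    {k m : ℕ → ℤ} {j : ℕ} (hk : |k (ι + 1)| ≤ k ι) (hm : |m (ι + 1)| ≤ m ι)
    (hnext : SelectionRuleAt (min (j + 1) n) k m (ι + 1))
    (h : ∫ x in (0)..π, levelIntegrand n k m j ι x ≠ 0) :
    SelectionRuleAt (min (j + 1) n) k m ι := by
  have hN : 0 < n - 1 - ι := by omega
  rcases lt_trichotomy ι j with hlt | rfl | hgt
  · have hcoord : ∀ x, coordFactor j ι x = sin x := fun x => if_pos hlt
    simp only [levelIntegrand, hcoord] at h
    have := hshFactor_selection_of_adjacent hN hk hm (hnext.1 (by omega)) h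
    exact ⟨fun _ => this, fun _ => by omega⟩
  · have hcoord : ∀ x, coordFactor ι ι x = cos x ^ 1 := fun x => by simp [coordFactor]
    simp only [levelIntegrand, hcoord, hnext.2 (by omega)] at h hm
    obtain ⟨hle, hpar⟩ := hshFactor_selection_of_eq hN hk hm 1 h
    have hne : m ι - k ι ≠ 0 := fun h0 => by simp [h0] at hpar
    refine ⟨fun _ => ?_, fun _ => by omega⟩
    rw [Int.abs_eq_natAbs] at hle ⊢
    omega
  · have hcoord : ∀ x, coordFactor j ι x = cos x ^ 0 := fun x => by
      simp [coordFactor, show ¬ ι < j by omega, show ι ≠ j by omega]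
    simp only [levelIntegrand, hcoord, hnext.2 (by omega)] at h hm
    have := (hshFactor_selection_of_eq hN hk hm 0 h).1
    exact ⟨fun _ => by omega, fun _ => by rw [← sub_eq_zero, ← abs_nonpos_iff]; exact_mod_cast this⟩

theorem selectionRuleAt_of_integral_azimuthIntegrand_ne_zero {n j : ℕ} (hn : 0 < n) (hj : j ≤ n)
    {k m : ℕ → ℤ} (h : ∫ φ in (0)..(2 * π), azimuthIntegrand n k m j φ ≠ 0) :
    SelectionRuleAt (min (j + 1) n) k m (n - 1) := by
  simp only [azimuthIntegrand, azimuthFactor] at h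
  split_ifs at h with hj₁ hj₂
  · simp only [Complex.ofReal_one, mul_one] at h
    have : m (n - 1) - k (n - 1) = 0 := by
      by_contra hd
      exact h (integral_exp_int_mul_I_eq_zero hd)
    exact ⟨fun _ => by omega, fun _ => by omega⟩
  · have : |m (n - 1) - k (n - 1)| = 1 := by
      by_contra hd
      exact h (integral_exp_int_mul_I_mul_cos_eq_zero hd)
    exact ⟨fun _ => this, fun _ => by omega⟩
  · have : |m (n - 1) - k (n - 1)| = 1 := by
      by_contra hd
      exact h (integral_exp_int_mul_I_mul_sin_eq_zero hd)
    exact ⟨fun _ => this, fun _ => by omega⟩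

theorem selectionRuleAt_of_integral_ne_zero {n : ℕ} (hn : 0 < n) {k m : ℕ → ℤ}
    (hk : ∀ i, i + 1 ≤ n - 1 → |k (i + 1)| ≤ k i) (hm : ∀ i, i + 1 ≤ n - 1 → |m (i + 1)| ≤ m i)
    (j : Fin (n + 1))
    (h : ∫ z in sphDomain n, (sphCoord n z.1 z.2 j : ℂ) * (starRingEnd ℂ) (hshFun n k z.1 z.2)
      * hshFun n m z.1 z.2 * (sphWeight n z.1 : ℂ) ≠ 0)
    {ι : ℕ} (hι : ι ≤ n - 1) : SelectionRuleAt (min (j + 1) n) k m ι := by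
  simp only [sphCoord_mul_conj_hshFun_mul_hshFun] at h
  rw [integral_sphDomain_prod_mul n (fun τ x => (levelIntegrand n k m j τ x : ℂ))] at h
  obtain ⟨hlevel, hazimuth⟩ := mul_ne_zero_iff.mp h
  induction hι using Nat.decreasingInduction with
  | self => exact selectionRuleAt_of_integral_azimuthIntegrand_ne_zero hn (by omega) hazimuth
  | of_succ ι hι hnext =>
    refine selectionRuleAt_of_integral_levelIntegrand_ne_zero hι (hk ι (by omega)) (hm ι (by omega))
      hnext fun h0 => Finset.prod_ne_zero_iff.mp hlevel ⟨ι, hι⟩ (Finset.mem_univ _) ?_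
    rw [intervalIntegral.integral_ofReal, h0, Complex.ofReal_zero]

theorem selection_rule_of_integral_ne_zero {n : ℕ} (hn : 0 < n) (p q : HSHIndex n)
    (j : Fin (n + 1))
    (h : ∫ z in sphDomain n, (sphCoord n z.1 z.2 j : ℂ) * (starRingEnd ℂ) (hshFun n p.1.2 z.1 z.2)
      * hshFun n q.1.2 z.1 z.2 * (sphWeight n z.1 : ℂ) ≠ 0) :
    |(q.1.1 : ℤ) - (p.1.1 : ℤ)| = 1 ∧ ∃ ν : ℕ, 1 ≤ ν ∧ ν ≤ n ∧
      (∀ ι, ι < ν → |q.1.2 ι - p.1.2 ι| = 1) ∧ (∀ ι, ν ≤ ι → q.1.2 ι = p.1.2 ι) := by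
  have hrule : ∀ ι ≤ n - 1, SelectionRuleAt (min (j + 1) n) p.1.2 q.1.2 ι := fun ι hι =>
    selectionRuleAt_of_integral_ne_zero hn p.2.2.1 q.2.2.1 j h hι
  refine ⟨?_, min (j + 1) n, by omega, by omega, fun ι hι => (hrule ι (by omega)).1 hι,
    fun ι hι => ?_⟩
  · rw [← p.2.1, ← q.2.1]
    exact (hrule 0 (by omega)).1 (by omega)
  · rcases le_or_gt ι (n - 1) with hι' | hι'
    · exact (hrule ι hι').2 hι
    · rw [p.2.2.2 ι (by omega), q.2.2.2 ι (by omega)]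

theorem integral_sphCoord_mul_conj_mul_eq_zero {n : ℕ} (hn : 0 < n) (A : HSHIndex n → ℝ)
    (Y : HSHIndex n → (Fin (n - 1) → ℝ) → ℝ → ℂ)
    (hYdef : ∀ p θ φ, Y p θ φ = (A p : ℂ) * hshFun n p.1.2 θ φ) (p q : HSHIndex n)
    (hnot : ¬ (|(q.1.1 : ℤ) - (p.1.1 : ℤ)| = 1 ∧ ∃ ν : ℕ, 1 ≤ ν ∧ ν ≤ n ∧
      (∀ ι, ι < ν → |q.1.2 ι - p.1.2 ι| = 1) ∧ (∀ ι, ν ≤ ι → q.1.2 ι = p.1.2 ι)))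
    (j : Fin (n + 1)) :
    ∫ z in sphDomain n, (sphCoord n z.1 z.2 j : ℂ) * (starRingEnd ℂ) (Y p z.1 z.2) * Y q z.1 z.2
      * (sphWeight n z.1 : ℂ) = 0 := by
  have hscale : (∫ z in sphDomain n, (sphCoord n z.1 z.2 j : ℂ) * (starRingEnd ℂ) (Y p z.1 z.2)
      * Y q z.1 z.2 * (sphWeight n z.1 : ℂ)) = (A p * A q : ℂ) * ∫ z in sphDomain n,
        (sphCoord n z.1 z.2 j : ℂ) * (starRingEnd ℂ) (hshFun n p.1.2 z.1 z.2)
          * hshFun n q.1.2 z.1 z.2 * (sphWeight n z.1 : ℂ) := by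
    rw [← integral_const_mul]
    congr 1 with z
    simp only [hYdef, map_mul, Complex.conj_ofReal]
    ring
  rw [hscale, not_not.mp (mt (selection_rule_of_integral_ne_zero hn p q j) hnot), mul_zero]

/-! ### Term-by-term integration -/

theorem continuous_hshFun (n : ℕ) (k : ℕ → ℤ) :
    Continuous fun z : (Fin (n - 1) → ℝ) × ℝ => hshFun n k z.1 z.2 := by
  unfold hshFun
  fun_prop

theorem continuous_sphCoord (n : ℕ) (j : Fin (n + 1)) :
    Continuous fun z : (Fin (n - 1) → ℝ) × ℝ => sphCoord n z.1 z.2 j := by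
  unfold sphCoord
  split_ifs <;> fun_prop

theorem isCompact_sphDomain (n : ℕ) : IsCompact (sphDomain n) :=
  (isCompact_univ_pi fun _ => isCompact_Icc).prod isCompact_Icc

theorem measurableSet_sphDomain (n : ℕ) : MeasurableSet (sphDomain n) :=
  (MeasurableSet.univ_pi fun _ => measurableSet_Icc).prod measurableSet_Icc

theorem sphWeight_nonneg {n : ℕ} {z : (Fin (n - 1) → ℝ) × ℝ} (hz : z ∈ sphDomain n) :
    0 ≤ sphWeight n z.1 :=
  Finset.prod_nonneg fun τ _ => pow_nonneg (sin_nonneg_of_nonneg_of_le_pi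
    (hz.1 τ (Set.mem_univ τ)).1 (hz.1 τ (Set.mem_univ τ)).2) _

theorem abs_sphCoord_le_one (n : ℕ) (θ : Fin (n - 1) → ℝ) (φ : ℝ) (j : Fin (n + 1)) :
    |sphCoord n θ φ j| ≤ 1 := by
  rw [sphCoord_eq_prod, abs_mul, Finset.abs_prod]
  refine mul_le_one₀ (Finset.prod_le_one (fun _ _ => abs_nonneg _) fun τ _ => ?_) (abs_nonneg _) ?_
  · unfold coordFactor
    split_ifs <;> simp [abs_sin_le_one, abs_cos_le_one]
  · unfold azimuthFactor
    split_ifs <;> simp [abs_sin_le_one, abs_cos_le_one]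

theorem norm_sphCoord_mul_sphWeight_le {n : ℕ} {z : (Fin (n - 1) → ℝ) × ℝ}
    (hz : z ∈ sphDomain n) (j : Fin (n + 1)) :
    ‖(sphCoord n z.1 z.2 j : ℂ) * (sphWeight n z.1 : ℂ)‖ ≤ sphWeight n z.1 := by
  rw [norm_mul, Complex.norm_real, Complex.norm_real, Real.norm_eq_abs, Real.norm_eq_abs,
    abs_of_nonneg (sphWeight_nonneg hz)]
  exact mul_le_of_le_one_left (sphWeight_nonneg hz) (abs_sphCoord_le_one n z.1 z.2 j)

instance (n : ℕ) : Countable (HSHIndex n) := by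
  refine Function.Injective.countable (f := fun p : HSHIndex n => (p.1.1, fun i : Fin n => p.1.2 i))
    fun p q hpq => ?_
  obtain ⟨hl, hk⟩ := Prod.ext_iff.mp hpq
  refine Subtype.ext (Prod.ext hl (funext fun i => ?_))
  rcases lt_or_ge i n with hi | hi
  · exact congrFun hk ⟨i, hi⟩
  · rw [p.2.2.2 i hi, q.2.2.2 i hi]

theorem hasSum_integral_sphCoord_mul_normSq {ι : Type*} [Countable ι] {n : ℕ} (j : Fin (n + 1))
    (c : ι → ℂ) (Y : ι → (Fin (n - 1) → ℝ) → ℝ → ℂ) (F : (Fin (n - 1) → ℝ) → ℝ → ℂ)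
    (hYcont : ∀ p, Continuous fun z : (Fin (n - 1) → ℝ) × ℝ => Y p z.1 z.2)
    (hFexp : ∀ θ φ, HasSum (fun p => c p * Y p θ φ) (F θ φ))
    (hdom : Summable fun pq : ι × ι =>
      ‖c pq.1‖ * ‖c pq.2‖ * ∫ z in sphDomain n,
        ‖Y pq.1 z.1 z.2‖ * ‖Y pq.2 z.1 z.2‖ * sphWeight n z.1) :
    HasSum (fun pq : ι × ι => (starRingEnd ℂ) (c pq.1) * c pq.2 * ∫ z in sphDomain n,
        (sphCoord n z.1 z.2 j : ℂ) * (starRingEnd ℂ) (Y pq.1 z.1 z.2) * Y pq.2 z.1 z.2 *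
          (sphWeight n z.1 : ℂ))
      (∫ z in sphDomain n,
        (sphCoord n z.1 z.2 j : ℂ) * (‖F z.1 z.2‖ ^ 2 : ℝ) * (sphWeight n z.1 : ℂ)) := by
  set ρ : (Fin (n - 1) → ℝ) × ℝ → ℂ := fun z => (sphCoord n z.1 z.2 j : ℂ) * (sphWeight n z.1 : ℂ)
  have hρ : Continuous ρ := by
    have := continuous_sphCoord n j
    unfold ρ sphWeight
    fun_prop
  have hint : ∀ pq : ι × ι, IntegrableOn (fun z => (starRingEnd ℂ) (c pq.1 * Y pq.1 z.1 z.2)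
      * (c pq.2 * Y pq.2 z.1 z.2) * ρ z) (sphDomain n) := fun pq =>
    (((continuous_const.mul (hYcont pq.1)).star.mul (continuous_const.mul (hYcont pq.2))).mul
      hρ).continuousOn.integrableOn_compact (isCompact_sphDomain n)
  have hbound : ∀ pq : ι × ι, ∫ z in sphDomain n, ‖(starRingEnd ℂ) (c pq.1 * Y pq.1 z.1 z.2)
      * (c pq.2 * Y pq.2 z.1 z.2) * ρ z‖ ≤ ‖c pq.1‖ * ‖c pq.2‖ * ∫ z in sphDomain n,
        ‖Y pq.1 z.1 z.2‖ * ‖Y pq.2 z.1 z.2‖ * sphWeight n z.1 := by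
    intro pq
    rw [← integral_const_mul]
    refine setIntegral_mono_on (hint pq).norm ?_ (measurableSet_sphDomain n) fun z hz => ?_
    · exact (continuous_const.mul (((hYcont pq.1).norm.mul (hYcont pq.2).norm).mul
        (by unfold sphWeight; fun_prop))).continuousOn.integrableOn_compact (isCompact_sphDomain n)
    · rw [norm_mul, norm_mul, RCLike.norm_conj, norm_mul, norm_mul]
      calc _ ≤ ‖c pq.1‖ * ‖Y pq.1 z.1 z.2‖ * (‖c pq.2‖ * ‖Y pq.2 z.1 z.2‖) * sphWeight n z.1 :=
            mul_le_mul_of_nonneg_left (norm_sphCoord_mul_sphWeight_le hz j) (by positivity)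
        _ = _ := by ring
  have hsum := hasSum_integral_conj_mul_mul (μ := volume.restrict (sphDomain n))
    (f := fun p z => c p * Y p z.1 z.2) ρ (fun z => hFexp z.1 z.2) hint
    (hdom.of_nonneg_of_le (fun _ => integral_nonneg fun _ => norm_nonneg _) hbound)
  convert hsum using 1
  · funext pq
    rw [← integral_const_mul]
    congr 1 with z
    simp only [ρ, map_mul]
    ring
  · congr 1 with z
    simp only [ρ]
    ring

theorem center_of_gravity_series_general (n : ℕ) (hn : 2 ≤ n)
    -- normalization constants making the basis orthonormal
    (A : HSHIndex n → ℝ)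
    -- the normalized basis functions `Y_l^k`
    (Y : HSHIndex n → (Fin (n - 1) → ℝ) → ℝ → ℂ)
    (hYdef : ∀ p θ φ, Y p θ φ = (A p : ℂ) * hshFun n p.1.2 θ φ)
    -- a continuous function `F` with Fourier coefficients `c p`
    (c : HSHIndex n → ℂ) (F : (Fin (n - 1) → ℝ) → ℝ → ℂ)
    (hFexp : ∀ θ φ, HasSum (fun p => c p * Y p θ φ) (F θ φ))
    -- absolute convergence allowing the interchange of summation and integration
    (hdom : Summable fun pq : HSHIndex n × HSHIndex n =>
      ‖c pq.1‖ * ‖c pq.2‖ * ∫ z in sphDomain n,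
        ‖Y pq.1 z.1 z.2‖ * ‖Y pq.2 z.1 z.2‖ * sphWeight n z.1)
    -- the matrix elements `I(l₁,k,l₂,m) = ∫_{S^n} x ⬝ conj(Y_{l₁}^k) Y_{l₂}^m dσ`
    (I : HSHIndex n → HSHIndex n → Fin (n + 1) → ℂ)
    (hIdef : ∀ p q j, I p q j = (1 / sphArea n : ℂ) * ∫ z in sphDomain n,
        (sphCoord n z.1 z.2 j : ℂ) * (starRingEnd ℂ) (Y p z.1 z.2) * Y q z.1 z.2 *
          (sphWeight n z.1 : ℂ)) :
    -- (a) `‖F‖₂² ξ_O(F) = ∑ conj(F̂^k_{l₁}) F̂^m_{l₂} I(l₁,k,l₂,m)` componentwise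
    (∀ j : Fin (n + 1),
      HasSum (fun pq : HSHIndex n × HSHIndex n =>
          (starRingEnd ℂ) (c pq.1) * c pq.2 * I pq.1 pq.2 j)
        ((1 / sphArea n : ℂ) * ∫ z in sphDomain n,
          (sphCoord n z.1 z.2 j : ℂ) * (‖F z.1 z.2‖ ^ 2 : ℝ) *
            (sphWeight n z.1 : ℂ))) ∧
    -- (b) `I(l₁,k,l₂,m) = 0` unless `|l₁-l₂| = 1` together with: there is a
    -- `ν ∈ {1,…,n}` with `m_ι = k_ι ± 1` for `ι < ν` and `m_ι = k_ι` for `ι ≥ ν`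
    (∀ p q : HSHIndex n,
      ¬ (|(q.1.1 : ℤ) - (p.1.1 : ℤ)| = 1 ∧ ∃ ν : ℕ, 1 ≤ ν ∧ ν ≤ n ∧
          (∀ ι, ι < ν → |q.1.2 ι - p.1.2 ι| = 1) ∧
          (∀ ι, ν ≤ ι → q.1.2 ι = p.1.2 ι)) →
        ∀ j : Fin (n + 1), I p q j = 0) := by
  refine ⟨fun j => ?_, fun p q hnot j => ?_⟩
  · have hYcont : ∀ p, Continuous fun z : (Fin (n - 1) → ℝ) × ℝ => Y p z.1 z.2 := fun p => by
      simpa only [hYdef] using continuous_const.fun_mul (continuous_hshFun n p.1.2)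
    simpa only [hIdef, mul_left_comm] using
      (hasSum_integral_sphCoord_mul_normSq j c Y F hYcont hFexp hdom).mul_left (1 / sphArea n : ℂ)
  · rw [hIdef, integral_sphCoord_mul_conj_mul_eq_zero (by omega) A Y hYdef p q hnot j, mul_zero]

theorem center_of_gravity_series (n : ℕ) (hn : 2 ≤ n)
    -- normalization constants making the basis orthonormal
    (A : HSHIndex n → ℝ) (hA : ∀ p, 0 < A p)
    -- the normalized basis functions `Y_l^k`
    (Y : HSHIndex n → (Fin (n - 1) → ℝ) → ℝ → ℂ)
    (hYdef : ∀ p θ φ, Y p θ φ = (A p : ℂ) * hshFun n p.1.2 θ φ)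
    -- orthonormality w.r.t. the normalized surface measure
    (horth : ∀ p q : HSHIndex n,
      (p = q → (1 / sphArea n : ℂ) * ∫ z in sphDomain n,
          (starRingEnd ℂ) (Y p z.1 z.2) * Y q z.1 z.2 * (sphWeight n z.1 : ℂ) = 1) ∧
      (p ≠ q → (1 / sphArea n : ℂ) * ∫ z in sphDomain n,
          (starRingEnd ℂ) (Y p z.1 z.2) * Y q z.1 z.2 * (sphWeight n z.1 : ℂ) = 0))
    -- a continuous function `F` with Fourier coefficients `c p`
    (c : HSHIndex n → ℂ) (F : (Fin (n - 1) → ℝ) → ℝ → ℂ)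
    (hFcont : Continuous fun z : (Fin (n - 1) → ℝ) × ℝ => F z.1 z.2)
    (hFexp : ∀ θ φ, HasSum (fun p => c p * Y p θ φ) (F θ φ))
    -- `‖F‖₂ ≠ 0`
    (hFne : (1 / sphArea n) * (∫ z in sphDomain n,
        ‖F z.1 z.2‖ ^ 2 * sphWeight n z.1) ≠ 0)
    -- absolute convergence allowing the interchange of summation and integration
    (hdom : Summable fun pq : HSHIndex n × HSHIndex n =>
      ‖c pq.1‖ * ‖c pq.2‖ * ∫ z in sphDomain n,
        ‖Y pq.1 z.1 z.2‖ * ‖Y pq.2 z.1 z.2‖ * sphWeight n z.1)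
    -- the matrix elements `I(l₁,k,l₂,m) = ∫_{S^n} x ⬝ conj(Y_{l₁}^k) Y_{l₂}^m dσ`
    (I : HSHIndex n → HSHIndex n → Fin (n + 1) → ℂ)
    (hIdef : ∀ p q j, I p q j = (1 / sphArea n : ℂ) * ∫ z in sphDomain n,
        (sphCoord n z.1 z.2 j : ℂ) * (starRingEnd ℂ) (Y p z.1 z.2) * Y q z.1 z.2 *
          (sphWeight n z.1 : ℂ)) :
    -- (a) `‖F‖₂² ξ_O(F) = ∑ conj(F̂^k_{l₁}) F̂^m_{l₂} I(l₁,k,l₂,m)` componentwise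
    (∀ j : Fin (n + 1),
      HasSum (fun pq : HSHIndex n × HSHIndex n =>
          (starRingEnd ℂ) (c pq.1) * c pq.2 * I pq.1 pq.2 j)
        ((1 / sphArea n : ℂ) * ∫ z in sphDomain n,
          (sphCoord n z.1 z.2 j : ℂ) * (‖F z.1 z.2‖ ^ 2 : ℝ) *
            (sphWeight n z.1 : ℂ))) ∧
    -- (b) `I(l₁,k,l₂,m) = 0` unless `|l₁-l₂| = 1` together with: there is a
    -- `ν ∈ {1,…,n}` with `m_ι = k_ι ± 1` for `ι < ν` and `m_ι = k_ι` for `ι ≥ ν`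
    (∀ p q : HSHIndex n,
      ¬ (|(q.1.1 : ℤ) - (p.1.1 : ℤ)| = 1 ∧ ∃ ν : ℕ, 1 ≤ ν ∧ ν ≤ n ∧
          (∀ ι, ι < ν → |q.1.2 ι - p.1.2 ι| = 1) ∧
          (∀ ι, ν ≤ ι → q.1.2 ι = p.1.2 ι)) →
        ∀ j : Fin (n + 1), I p q j = 0) :=
  center_of_gravity_series_general n hn A Y hYdef c F hFexp hdom I hIdef
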